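/- arXiv:2306.01541 — 2 statements merged into one kernel-verified Lean document; each statement's English description precedes it below -/
import Mathlib

section
/- Let d ≥ 1, let p be a prime with p ≥ d, and let k = (k₁,...,k_d) ∈ ℤ^d be nonzero with at least one coordinate not divisible by p. Then |(1/p²)·∑_{h=0}^{p−1}∑_{ℓ=0}^{p−1} exp(2πi·∑_{j=1}^d k_j·h·ℓ^j/p)| ≤ width(supp(k))/p, where width(supp(k)) = max supp(k) − min supp(k) + 1 and supp(k) = {j : k_j ≠ 0}. -/
open Finset

noncomputable section

/-- The support of a frequency vector. -/
def supp {d : ℕ} (k : Fin d → ℤ) : Finset (Fin d) :=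
  Finset.univ.filter (fun j => k j ≠ 0)

/-- `width(supp k) = max supp(k) - min supp(k) + 1`, with value 1 for empty support. -/
def width {d : ℕ} (k : Fin d → ℤ) : ℕ :=
  if h : (supp k).Nonempty then ((supp k).max' h).val - ((supp k).min' h).val + 1 else 1

/-- `min_{j ∈ supp(k)} log |k_j|`, with value 0 for empty support. -/
noncomputable def logmin {d : ℕ} (k : Fin d → ℤ) : ℝ :=
  if h : (supp k).Nonempty then (supp k).inf' h (fun j => Real.log |(k j : ℝ)|) else 0

/-- `exp(2πiz)`. -/
noncomputable def e2pi (z : ℂ) : ℂ := Complex.exp (2 * Real.pi * Complex.I * z)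

/-!
Summing over `h` first, the inner sum `∑ₕ e(h a / p)` is `p` when `p ∣ a` and `0` otherwise, so the
normalised double sum equals `N / p`, where `N` counts the `ℓ < p` with `∑ⱼ kⱼ ℓ^j ≡ 0 (mod p)`.
Since some `kⱼ` is a unit mod `p`, this is a nonzero polynomial over `𝔽_p` whose exponents lie
between `min supp k` and `max supp k`. It has at most `max supp k` roots counted with multiplicity,
of which `0` accounts for at least `min supp k`, so it has at most `max supp k - min supp k` nonzero
roots.
-/

open Polynomial

lemma sum_range_e2pi_mul_div (n : ℕ) (hn : n ≠ 0) (a : ℤ) :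
    ∑ h ∈ range n, e2pi (h * a / n) = if (n : ℤ) ∣ a then (n : ℂ) else 0 := by
  have hζ := Complex.isPrimitiveRoot_exp n hn
  set ζ := Complex.exp (2 * Real.pi * Complex.I / n)
  have hterm : ∀ h : ℕ, e2pi (h * a / n) = (ζ ^ a) ^ h := by
    intro h
    rw [e2pi, ← Complex.exp_int_mul, ← Complex.exp_nat_mul]
    ring_nf
  simp_rw [hterm]
  split_ifs with hdvd
  · simp [(hζ.zpow_eq_one_iff_dvd a).mpr hdvd]
  · have hpow : (ζ ^ a) ^ n = 1 := by
      rw [← zpow_natCast, ← zpow_mul, mul_comm, zpow_mul, zpow_natCast, hζ.pow_eq_one, one_zpow]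
    rw [geom_sum_eq (mt (hζ.zpow_eq_one_iff_dvd a).mp hdvd), hpow, sub_self, zero_div]

lemma sum_range_sum_range_e2pi (n : ℕ) (hn : n ≠ 0) (f : ℕ → ℤ) :
    ∑ h ∈ range n, ∑ l ∈ range n, e2pi (h * f l / n) =
      #{l ∈ range n | (n : ℤ) ∣ f l} * n := by
  rw [sum_comm]
  simp_rw [sum_range_e2pi_mul_div n hn, sum_ite, sum_const_zero, add_zero, sum_const, nsmul_eq_mul]

lemma card_roots_toFinset_le_natDegree_sub_natTrailingDegree_add_one {R : Type*} [CommRing R]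
    [IsDomain R] [DecidableEq R] (P : R[X]) :
    P.roots.toFinset.card ≤ P.natDegree - P.natTrailingDegree + 1 := by
  set nonzeroRoots := P.roots.filter (fun x => ¬ 0 = x)
  have hzero : P.roots.count 0 = P.natTrailingDegree := by
    rw [count_roots, rootMultiplicity_eq_natTrailingDegree']
  have hcard : P.roots.card = P.natTrailingDegree + nonzeroRoots.card := by
    rw [Multiset.card_eq_countP_add_countP (0 = ·), ← hzero,
      Multiset.countP_eq_card_filter (fun x => ¬ 0 = x)]
    rfl
  have hsub : P.roots.toFinset ⊆ insert 0 nonzeroRoots.toFinset := by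
    intro x hx
    rw [mem_insert, Multiset.mem_toFinset, Multiset.mem_filter]
    exact or_iff_not_imp_left.mpr fun hx0 => ⟨Multiset.mem_toFinset.mp hx, Ne.symm hx0⟩
  calc P.roots.toFinset.card ≤ nonzeroRoots.toFinset.card + 1 :=
        (card_le_card hsub).trans (card_insert_le _ _)
    _ ≤ nonzeroRoots.card + 1 := by gcongr; exact Multiset.toFinset_card_le _
    _ ≤ P.natDegree - P.natTrailingDegree + 1 := by
        have := card_roots' P
        omega

section phasePoly

variable {R : Type*} [CommRing R] {d : ℕ} (k : Fin d → ℤ)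

def phasePoly : R[X] := ∑ j, C (k j : R) * X ^ (j.val + 1)

lemma eval_phasePoly (x : R) : (phasePoly k).eval x = ∑ j, (k j : R) * x ^ (j.val + 1) := by
  simp [phasePoly, eval_finsetSum]

lemma coeff_phasePoly (n : ℕ) :
    (phasePoly k : R[X]).coeff n = ∑ j, if n = j.val + 1 then (k j : R) else 0 := by
  simp only [phasePoly, finsetSum_coeff, coeff_C_mul_X_pow]

lemma coeff_phasePoly_eq_zero {n : ℕ} (hn : ∀ j ∈ supp k, n ≠ j.val + 1) :
    (phasePoly k : R[X]).coeff n = 0 := by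
  rw [coeff_phasePoly]
  refine sum_eq_zero fun j _ => ?_
  by_cases hj : j ∈ supp k
  · rw [if_neg (hn j hj)]
  · have hkj : k j = 0 := by simpa [supp] using hj
    simp [hkj]

lemma coeff_phasePoly_succ (j : Fin d) : (phasePoly k : R[X]).coeff (j.val + 1) = k j := by
  rw [coeff_phasePoly, sum_eq_single j]
  · simp
  · intro i _ hij
    rw [if_neg (by omega)]
  · simp

lemma natDegree_phasePoly_le (hne : (supp k).Nonempty) :
    (phasePoly k : R[X]).natDegree ≤ ((supp k).max' hne).val + 1 :=
  natDegree_le_iff_coeff_eq_zero.mpr fun _ hn => coeff_phasePoly_eq_zero k fun j hj => by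
    have := (supp k).le_max' j hj
    omega

lemma le_natTrailingDegree_phasePoly (hne : (supp k).Nonempty) (h0 : (phasePoly k : R[X]) ≠ 0) :
    ((supp k).min' hne).val + 1 ≤ (phasePoly k : R[X]).natTrailingDegree :=
  le_natTrailingDegree h0 fun _ hn => coeff_phasePoly_eq_zero k fun j hj => by
    have := (supp k).min'_le j hj
    omega

end phasePoly

lemma card_filter_dvd_phase_le_width {d p : ℕ} (hp : p.Prime) (k : Fin d → ℤ)
    (hdvd : ∃ j, ¬ (p : ℤ) ∣ k j) :
    #{l ∈ range p | (p : ℤ) ∣ ∑ j, k j * ((l : ℕ) : ℤ) ^ (j.val + 1)} ≤ width k := by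
  have : Fact p.Prime := ⟨hp⟩
  obtain ⟨j₀, hj₀⟩ := hdvd
  have hkj₀ : (k j₀ : ZMod p) ≠ 0 := by rwa [Ne, ZMod.intCast_zmod_eq_zero_iff_dvd]
  have hne : (supp k).Nonempty := ⟨j₀, mem_filter.mpr ⟨mem_univ _, fun h => hj₀ (h ▸ dvd_zero _)⟩⟩
  have hP0 : (phasePoly k : (ZMod p)[X]) ≠ 0 := fun h =>
    hkj₀ (by rw [← coeff_phasePoly_succ k j₀, h, coeff_zero])
  have hdeg := natDegree_phasePoly_le (R := ZMod p) k hne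
  have htrail := le_natTrailingDegree_phasePoly k hne hP0
  refine (card_le_card_of_injOn (fun l : ℕ => (l : ZMod p)) (t := (phasePoly k).roots.toFinset)
    ?roots ?inj).trans ?_
  case roots =>
    intro l hl
    have hl := (mem_filter.mp (mem_coe.mp hl)).2
    rw [← ZMod.intCast_zmod_eq_zero_iff_dvd] at hl
    push_cast at hl
    rw [mem_coe, Multiset.mem_toFinset, mem_roots hP0, IsRoot.def, eval_phasePoly, hl]
  case inj =>
    intro a ha b hb hab
    have hval := congrArg ZMod.val hab
    rwa [ZMod.val_cast_of_lt (mem_range.mp (mem_filter.mp (mem_coe.mp ha)).1),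
      ZMod.val_cast_of_lt (mem_range.mp (mem_filter.mp (mem_coe.mp hb)).1)] at hval
  calc _ ≤ (phasePoly k : (ZMod p)[X]).natDegree - (phasePoly k).natTrailingDegree + 1 :=
        card_roots_toFinset_le_natDegree_sub_natTrailingDegree_add_one _
    _ ≤ width k := by rw [width, dif_pos hne]; omega

theorem korobov_second_exponential_sum_general (d p : ℕ) (hp : p.Prime)
    (k : Fin d → ℤ) (hdvd : ∃ j, ¬ (p : ℤ) ∣ k j) :
    ‖(1 / ((p : ℂ) ^ 2)) * ∑ h ∈ Finset.range p, ∑ l ∈ Finset.range p,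
        e2pi ((h : ℂ) * (∑ j, (k j : ℂ) * (l : ℂ) ^ (j.val + 1)) / (p : ℂ))‖
      ≤ (width k : ℝ) / p := by
  have hsum := sum_range_sum_range_e2pi p hp.ne_zero fun l => ∑ j, k j * (l : ℤ) ^ (j.val + 1)
  set N := #{l ∈ range p | (p : ℤ) ∣ ∑ j, k j * ((l : ℕ) : ℤ) ^ (j.val + 1)}
  push_cast at hsum
  calc _ = ‖(N : ℂ) / p‖ := by rw [hsum]; field_simp
    _ = (N : ℝ) / p := by rw [norm_div, Complex.norm_natCast, Complex.norm_natCast]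
    _ ≤ (width k : ℝ) / p := by
        gcongr
        exact_mod_cast card_filter_dvd_phase_le_width hp k hdvd

theorem korobov_second_exponential_sum (d p : ℕ) (hd : 1 ≤ d) (hp : p.Prime) (hpd : d ≤ p)
    (k : Fin d → ℤ) (hk : k ≠ 0) (hdvd : ∃ j, ¬ (p : ℤ) ∣ k j) :
    ‖(1 / ((p : ℂ) ^ 2)) * ∑ h ∈ Finset.range p, ∑ l ∈ Finset.range p,
        e2pi ((h : ℂ) * (∑ j, (k j : ℂ) * (l : ℂ) ^ (j.val + 1)) / (p : ℂ))‖
      ≤ (width k : ℝ) / p :=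
  korobov_second_exponential_sum_general d p hp k hdvd

end
end

section
/- For any linear algorithm Q_{d,n}(f) = ∑_{h=0}^{n−1} w_h f(x_h) using n function values, any finite set A ⊂ ℤ^d with |A| > n satisfies: the worst-case error of Q_{d,n} over the unit ball of F_d¹ is at least (max_{ℓ∈A} ∑_{k∈A} max(1, min_{j∈supp(k−ℓ)} log|k_j − ℓ_j|))^{−1}. -/
open Finset

noncomputable section

/-- The weight `max(1, min_{j ∈ supp k} log |k_j|)` defining the norm of `F_d¹`. -/
noncomputable def weight1 {d : ℕ} (k : Fin d → ℤ) : ℝ := max 1 (logmin k)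

/-!
Since `#A > n`, some nonzero trigonometric polynomial with frequencies in `A` vanishes at all
nodes. Shift its frequencies by the position `ℓ` of a coefficient of maximal modulus and
normalise: the constant coefficient becomes `1 / S` with `S = ∑_{k ∈ A} weight1 (k - ℓ)`, and
every coefficient has modulus at most `1 / S`, so the weighted `ℓ¹`-norm is at most `1`.
Because the weight is even, the real part of this polynomial still has norm at most `1`; it
vanishes at the nodes and has integral `1 / S`, which is therefore the error of the rule.
-/

lemma exists_ne_zero_sum_smul_eq_zero_of_finrank_lt_card {K M ι : Type*} [Field K]
    [AddCommGroup M] [Module K M] [FiniteDimensional K M] (v : ι → M) {A : Finset ι}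
    (h : Module.finrank K M < #A) :
    ∃ c : ι → K, (∀ i ∉ A, c i = 0) ∧ (∃ i ∈ A, c i ≠ 0) ∧ ∑ i ∈ A, c i • v i = 0 := by
  have hdep : ¬ LinearIndepOn K v (A : Set ι) := fun hv =>
    h.not_ge (by simpa using hv.fintype_card_le_finrank)
  rw [linearIndepOn_finset_iff] at hdep
  push Not at hdep
  obtain ⟨c, hsum, i, hiA, hci⟩ := hdep
  refine ⟨(A : Set ι).indicator c, fun j hj => Set.indicator_of_notMem hj c,
    ⟨i, hiA, by rwa [Set.indicator_of_mem hiA]⟩, ?_⟩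
  rw [← hsum]
  exact Finset.sum_congr rfl fun j hj => by rw [Set.indicator_of_mem hj]

open MeasureTheory

section TrigPoly

variable {d : ℕ}

def fourierMode (k : Fin d → ℤ) (y : Fin d → ℝ) : ℂ := e2pi (∑ j, (k j : ℂ) * (y j : ℂ))

lemma fourierMode_add (a b : Fin d → ℤ) (y : Fin d → ℝ) :
    fourierMode (a + b) y = fourierMode a y * fourierMode b y := by
  simp only [fourierMode, e2pi, ← Complex.exp_add, Pi.add_apply, Int.cast_add, add_mul,
    Finset.sum_add_distrib, mul_add]

lemma star_fourierMode (k : Fin d → ℤ) (y : Fin d → ℝ) :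
    star (fourierMode k y) = fourierMode (-k) y := by
  simp only [fourierMode, e2pi, Complex.star_def, ← Complex.exp_conj, map_mul, map_sum,
    Complex.conj_I, Complex.conj_ofReal, map_ofNat, map_intCast, Pi.neg_apply, Int.cast_neg]
  congr 1
  simp only [neg_mul, Finset.sum_neg_distrib]
  ring

@[fun_prop]
lemma continuous_fourierMode (k : Fin d → ℤ) : Continuous (fourierMode k) := by
  unfold fourierMode e2pi
  fun_prop

lemma fourierMode_eq_prod (k : Fin d → ℤ) (y : Fin d → ℝ) :
    fourierMode k y = ∏ j, e2pi (k j * y j) := by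
  simp only [fourierMode, e2pi, Finset.mul_sum, Complex.exp_sum]

lemma integral_e2pi_intCast_mul (m : ℤ) :
    ∫ t in Set.Ico (0 : ℝ) 1, e2pi (m * t) = if m = 0 then 1 else 0 := by
  rw [integral_Ico_eq_integral_Ioc, ← intervalIntegral.integral_of_le zero_le_one]
  split_ifs with hm
  · simp [hm, e2pi]
  · have hc : 2 * Real.pi * Complex.I * m ≠ 0 := by simp [Real.pi_ne_zero, hm]
    simp only [e2pi, ← mul_assoc, integral_exp_mul_complex hc]
    rw [show 2 * Real.pi * Complex.I * m * ((1 : ℝ) : ℂ) = m * (2 * Real.pi * Complex.I) by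
      push_cast; ring]
    simp [Complex.exp_int_mul_two_pi_mul_I]

def unitCube (d : ℕ) : Set (Fin d → ℝ) := Set.univ.pi fun _ => Set.Ico 0 1

lemma integral_fourierMode (k : Fin d → ℤ) :
    ∫ y in unitCube d, fourierMode k y = if k = 0 then 1 else 0 := by
  simp only [unitCube, fourierMode_eq_prod, volume_pi, Measure.restrict_pi_pi]
  rw [integral_fintype_prod_eq_prod (fun j (t : ℝ) => e2pi (k j * t))]
  simp only [integral_e2pi_intCast_mul, Finset.prod_ite_zero, Finset.prod_const_one, funext_iff,
    Finset.mem_univ, true_implies, Pi.zero_apply]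

lemma integrableOn_unitCube {F : (Fin d → ℝ) → ℂ} (hF : Continuous F) :
    IntegrableOn F (unitCube d) :=
  (hF.continuousOn.integrableOn_compact (isCompact_univ_pi fun _ => isCompact_Icc)).mono_set
    (Set.pi_mono fun _ _ => Set.Ico_subset_Icc_self)

def trigPoly (u : (Fin d → ℤ) → ℂ) (y : Fin d → ℝ) : ℂ := ∑' m, u m * fourierMode m y

variable {u : (Fin d → ℤ) → ℂ}

lemma summable_mul_fourierMode (hu : u.HasFiniteSupport) (y : Fin d → ℝ) :
    Summable fun m => u m * fourierMode m y :=
  summable_of_hasFiniteSupport (by fun_prop)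

lemma trigPoly_eq_sum (hu : u.HasFiniteSupport) (y : Fin d → ℝ) :
    trigPoly u y = ∑ m ∈ hu.toFinset, u m * fourierMode m y :=
  tsum_eq_sum' ((Function.support_mul_subset_left u _).trans hu.coe_toFinset.superset)

lemma continuous_trigPoly (hu : u.HasFiniteSupport) : Continuous (trigPoly u) := by
  simp only [funext (trigPoly_eq_sum hu)]
  fun_prop

lemma integral_trigPoly (hu : u.HasFiniteSupport) : ∫ y in unitCube d, trigPoly u y = u 0 := by
  simp only [trigPoly_eq_sum hu]
  rw [integral_finsetSum _ fun m _ =>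
    (integrableOn_unitCube (continuous_fourierMode m)).const_mul (u m)]
  simp only [integral_const_mul, integral_fourierMode, mul_ite, mul_one, mul_zero,
    Finset.sum_ite_eq']
  split_ifs with h
  · rfl
  · exact (Function.notMem_support.mp fun h0 => h (hu.mem_toFinset.mpr h0)).symm

lemma trigPoly_shift (a : ℂ) (ℓ : Fin d → ℤ) (y : Fin d → ℝ) :
    trigPoly (fun m => a * u (m + ℓ)) y = a * fourierMode (-ℓ) y * trigPoly u y := by
  have hreindex := (Equiv.addRight ℓ).tsum_eq fun k => a * u k * fourierMode (k - ℓ) y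
  simp only [Equiv.coe_addRight, add_sub_cancel_right] at hreindex
  rw [trigPoly, trigPoly, ← tsum_mul_left, hreindex]
  congr 1 with k
  rw [sub_eq_add_neg, fourierMode_add]
  ring

def realCoeff (u : (Fin d → ℤ) → ℂ) (m : Fin d → ℤ) : ℂ := (u m + star (u (-m))) / 2

lemma re_trigPoly (hu : u.HasFiniteSupport) (y : Fin d → ℝ) :
    ((trigPoly u y).re : ℂ) = trigPoly (realCoeff u) y := by
  have hs := summable_mul_fourierMode hu y
  have hterm : ∀ m, realCoeff u m * fourierMode m y =
      (u m * fourierMode m y + star (u (-m) * fourierMode (-m) y)) / 2 := by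
    intro m
    rw [star_mul', star_fourierMode, neg_neg, realCoeff]
    ring
  have hs' : Summable fun m => star (u (-m) * fourierMode (-m) y) :=
    (hs.comp_injective neg_injective).star
  have hneg := (Equiv.neg (Fin d → ℤ)).tsum_eq fun m => u m * fourierMode m y
  simp only [Equiv.neg_apply] at hneg
  simp only [trigPoly]
  rw [tsum_congr hterm, tsum_div_const, hs.tsum_add hs', ← tsum_star, hneg, Complex.star_def,
    Complex.add_conj]
  push_cast
  ring

lemma norm_realCoeff_le (m : Fin d → ℤ) : ‖realCoeff u m‖ ≤ (‖u m‖ + ‖u (-m)‖) / 2 := by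
  rw [realCoeff, norm_div, Complex.norm_two, ← norm_star (u (-m))]
  gcongr
  exact norm_add_le _ _

section EvenWeight

variable {w : (Fin d → ℤ) → ℝ}

lemma norm_realCoeff_mul_le (hw0 : 0 ≤ w) (hw : ∀ m, w (-m) = w m) (m : Fin d → ℤ) :
    ‖realCoeff u m‖ * w m ≤ (‖u m‖ * w m + ‖u (-m)‖ * w (-m)) / 2 := by
  rw [hw, ← add_mul, ← div_mul_eq_mul_div]
  gcongr
  · exact hw0 m
  · exact norm_realCoeff_le m

lemma summable_norm_realCoeff_mul (hw0 : 0 ≤ w) (hw : ∀ m, w (-m) = w m)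
    (hs : Summable fun m => ‖u m‖ * w m) :
    Summable fun m => ‖realCoeff u m‖ * w m :=
  Summable.of_nonneg_of_le (fun m => mul_nonneg (norm_nonneg _) (hw0 m))
    (norm_realCoeff_mul_le hw0 hw) ((hs.add (hs.comp_injective neg_injective)).div_const 2)

lemma tsum_norm_realCoeff_mul_le (hw0 : 0 ≤ w) (hw : ∀ m, w (-m) = w m)
    (hs : Summable fun m => ‖u m‖ * w m) :
    ∑' m, ‖realCoeff u m‖ * w m ≤ ∑' m, ‖u m‖ * w m := by
  have hs' : Summable fun m => ‖u (-m)‖ * w (-m) := hs.comp_injective neg_injective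
  have hneg := (Equiv.neg (Fin d → ℤ)).tsum_eq fun m => ‖u m‖ * w m
  simp only [Equiv.neg_apply] at hneg
  calc ∑' m, ‖realCoeff u m‖ * w m
      ≤ ∑' m, (‖u m‖ * w m + ‖u (-m)‖ * w (-m)) / 2 :=
        (summable_norm_realCoeff_mul hw0 hw hs).tsum_le_tsum (norm_realCoeff_mul_le hw0 hw)
          ((hs.add hs').div_const 2)
    _ = ∑' m, ‖u m‖ * w m := by rw [tsum_div_const, hs.tsum_add hs', hneg, add_self_div_two]

end EvenWeight

lemma one_le_weight1 (k : Fin d → ℤ) : 1 ≤ weight1 k := le_max_left _ _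

lemma weight1_pos (k : Fin d → ℤ) : 0 < weight1 k := one_pos.trans_le (one_le_weight1 k)

lemma sum_weight1_sub_pos {A : Finset (Fin d → ℤ)} (hA : A.Nonempty) (ℓ : Fin d → ℤ) :
    0 < ∑ k ∈ A, weight1 (k - ℓ) :=
  Finset.sum_pos (fun _ _ => weight1_pos _) hA

lemma weight1_neg (k : Fin d → ℤ) : weight1 (-k) = weight1 k := by
  simp [weight1, logmin, supp]

lemma exists_trigPoly_eq_zero_at {n : ℕ} (x : Fin n → Fin d → ℝ) {A : Finset (Fin d → ℤ)}
    (hA : n < #A) :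
    ∃ c : (Fin d → ℤ) → ℂ, (∀ k ∉ A, c k = 0) ∧ (∃ k ∈ A, c k ≠ 0) ∧
      ∀ h, trigPoly c (x h) = 0 := by
  obtain ⟨c, hcA, hc0, hsum⟩ := exists_ne_zero_sum_smul_eq_zero_of_finrank_lt_card
    (fun k h => fourierMode k (x h)) (K := ℂ) (by rwa [Module.finrank_fin_fun])
  refine ⟨c, hcA, hc0, fun h => ?_⟩
  rw [trigPoly, tsum_eq_sum fun k hk => by rw [hcA k hk, zero_mul]]
  simpa using congrFun hsum h

lemma tsum_norm_shift_mul_le {A : Finset (Fin d → ℤ)} {c : (Fin d → ℤ) → ℂ}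
    (hcA : ∀ k ∉ A, c k = 0) {C : ℝ} (hC : ∀ k ∈ A, ‖c k‖ ≤ C) {w : (Fin d → ℤ) → ℝ}
    (hw0 : 0 ≤ w) (ℓ : Fin d → ℤ) :
    ∑' m, ‖c (m + ℓ)‖ * w m ≤ C * ∑ k ∈ A, w (k - ℓ) := by
  have hreindex := (Equiv.addRight ℓ).tsum_eq fun k => ‖c k‖ * w (k - ℓ)
  simp only [Equiv.coe_addRight, add_sub_cancel_right] at hreindex
  rw [hreindex, tsum_eq_sum fun k hk => by rw [hcA k hk, norm_zero, zero_mul], Finset.mul_sum]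
  exact Finset.sum_le_sum fun k hk => mul_le_mul_of_nonneg_right (hC k hk) (hw0 _)

lemma exists_fooling_coeff {n : ℕ} (x : Fin n → Fin d → ℝ) {A : Finset (Fin d → ℤ)}
    (hA : n < #A) :
    ∃ ℓ ∈ A, ∃ u : (Fin d → ℤ) → ℂ, u.HasFiniteSupport ∧
      u 0 = ((∑ k ∈ A, weight1 (k - ℓ))⁻¹ : ℝ) ∧ ∑' m, ‖u m‖ * weight1 m ≤ 1 ∧
      ∀ h, trigPoly u (x h) = 0 := by
  obtain ⟨c, hcA, ⟨k₀, hk₀A, hck₀⟩, hc⟩ := exists_trigPoly_eq_zero_at x hA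
  obtain ⟨ℓ, hℓA, hℓ⟩ := A.exists_max_image (‖c ·‖) ⟨k₀, hk₀A⟩
  have hcℓ : c ℓ ≠ 0 := norm_pos_iff.mp ((norm_pos_iff.mpr hck₀).trans_le (hℓ k₀ hk₀A))
  set S := ∑ k ∈ A, weight1 (k - ℓ)
  have hS : 0 < S := sum_weight1_sub_pos ⟨ℓ, hℓA⟩ ℓ
  set a : ℂ := (c ℓ * S)⁻¹
  refine ⟨ℓ, hℓA, fun m => a * c (m + ℓ), ?_, ?_, ?_, fun h => ?_⟩
  · refine (A.finite_toSet.preimage (add_left_injective ℓ).injOn).subset fun m hm => ?_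
    by_contra hmA
    exact hm (by simp [hcA _ hmA])
  · simp only [zero_add, a, mul_inv_rev, Complex.ofReal_inv]
    exact inv_mul_cancel_right₀ hcℓ _
  · calc ∑' m, ‖a * c (m + ℓ)‖ * weight1 m = ‖a‖ * ∑' m, ‖c (m + ℓ)‖ * weight1 m := by
          simp only [norm_mul, mul_assoc, tsum_mul_left]
      _ ≤ ‖a‖ * (‖c ℓ‖ * S) := by
          gcongr
          exact tsum_norm_shift_mul_le hcA hℓ (fun m => (weight1_pos m).le) ℓ
      _ = 1 := by
          simp only [a, norm_inv, norm_mul, Complex.norm_real, Real.norm_of_nonneg hS.le]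
          exact inv_mul_cancel₀ (by positivity)
  · rw [trigPoly_shift, hc, mul_zero]

end TrigPoly

open MeasureTheory in
theorem lower_bound_fooling_set (d n : ℕ)
    (x : Fin n → Fin d → ℝ) (w : Fin n → ℝ)
    (A : Finset (Fin d → ℤ)) (hA : n < A.card) :
    ∃ (f : (Fin d → ℝ) → ℝ) (fhat : (Fin d → ℤ) → ℂ),
      Continuous f ∧
      Summable (fun k : Fin d → ℤ => ‖fhat k‖ * weight1 k) ∧
      (∀ y : Fin d → ℝ,
        (f y : ℂ) = ∑' k : Fin d → ℤ, fhat k * e2pi (∑ j, (k j : ℂ) * (y j : ℂ))) ∧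
      (∑' k : Fin d → ℤ, ‖fhat k‖ * weight1 k) ≤ 1 ∧
      (A.sup' (Finset.card_pos.mp (by omega)) fun ℓ => ∑ k ∈ A, weight1 (k - ℓ))⁻¹ ≤
        |(∫ y in Set.univ.pi fun _ : Fin d => Set.Ico (0 : ℝ) 1, f y) -
          ∑ h : Fin n, w h * f (x h)| := by
  obtain ⟨ℓ, hℓA, u, hu, hu0, hnorm, hnodes⟩ := exists_fooling_coeff x hA
  have hw0 : 0 ≤ (weight1 : (Fin d → ℤ) → ℝ) := fun m => (weight1_pos m).le
  have hsum : Summable fun m => ‖u m‖ * weight1 m :=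
    summable_of_hasFiniteSupport <| hu.subset fun m hm => by
      simpa using Function.support_mul_subset_left _ _ hm
  have hS := sum_weight1_sub_pos ⟨ℓ, hℓA⟩ ℓ
  have hint : ∫ y in unitCube d, (trigPoly u y).re = (∑ k ∈ A, weight1 (k - ℓ))⁻¹ := by
    have hre := integral_re (integrableOn_unitCube (continuous_trigPoly hu))
    simp only [RCLike.re_to_complex] at hre
    rw [hre, integral_trigPoly hu, hu0, Complex.ofReal_re]
  refine ⟨fun y => (trigPoly u y).re, realCoeff u,
    Complex.continuous_re.comp (continuous_trigPoly hu),
    summable_norm_realCoeff_mul hw0 weight1_neg hsum, re_trigPoly hu,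
    (tsum_norm_realCoeff_mul_le hw0 weight1_neg hsum).trans hnorm, ?_⟩
  simp only [hnodes, Complex.zero_re, mul_zero, Finset.sum_const_zero, sub_zero]
  rw [← unitCube, hint, abs_of_pos (inv_pos.mpr hS)]
  exact inv_anti₀ hS (A.le_sup' (fun ℓ => ∑ k ∈ A, weight1 (k - ℓ)) hℓA)
end
end
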